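/- arXiv:2106.13562 — 2 statements merged into one kernel-verified Lean document; each statement's English description precedes it below -/
import Mathlib

section
/- Let H be the (n+2)×(n+2) matrix with H₀₁ = H₁₀ = 1 and all other entries 0, and a = exp(tH) for t ∈ ℝ. Then a·N̄(X)·a⁻¹ = N̄(e^{-t}X) for all X ∈ ℝⁿ. -/
/-! `n̄(X)` is an eigenvector of `ad H` with eigenvalue `-1`: `H n̄(X) = n̄(X) (H - 1)`. This
semiconjugation passes to exponentials, `exp(tH) n̄(X) = e^{-t} n̄(X) exp(tH)`, so conjugation by
`a = exp(tH)` scales `n̄(X)` by `e^{-t}`; since conjugation commutes with `exp` and `n̄` is linear,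
`a N̄(X) a⁻¹ = exp(e^{-t} n̄(X)) = N̄(e^{-t} X)`. -/

open Matrix NormedSpace

noncomputable section

/-- The nilpotent Lie algebra element `n̄(X)`. -/
def nbar (n : ℕ) (X : Fin n → ℝ) : Matrix (Fin 2 ⊕ Fin n) (Fin 2 ⊕ Fin n) ℝ :=
  Matrix.fromBlocks 0
    (Matrix.of fun i j => if i = 0 then X j else -X j)
    (Matrix.of fun (i : Fin n) (_ : Fin 2) => X i) 0

/-- `N̄(X) = exp(n̄(X))`. -/
def Nbar (n : ℕ) (X : Fin n → ℝ) : Matrix (Fin 2 ⊕ Fin n) (Fin 2 ⊕ Fin n) ℝ :=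
  exp (nbar n X)

/-- The generator `H` of `𝔞`: `H₀₁ = H₁₀ = 1`, all other entries `0`. -/
def Hmat (n : ℕ) : Matrix (Fin 2 ⊕ Fin n) (Fin 2 ⊕ Fin n) ℝ :=
  Matrix.fromBlocks !![0, 1; 1, 0] 0 0 0

theorem exp_mul_mul_exp_neg_of_lie_eq_smul {𝕂 𝔸 : Type*} [RCLike 𝕂] [NormedRing 𝔸]
    [NormedAlgebra 𝕂 𝔸] [CompleteSpace 𝔸] {a b : 𝔸} {μ : 𝕂} (h : ⁅a, b⁆ = μ • b) :
    exp a * b * exp (-a) = exp μ • b := by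
  -- Mathlib's lemmas on `exp` are stated for normed `ℚ`-algebras.
  let := NormedAlgebra.restrictScalars ℚ 𝕂 𝔸
  have hsemi : SemiconjBy b (a + algebraMap 𝕂 𝔸 μ) a := by
    rw [SemiconjBy, mul_add, ← Algebra.commutes, ← Algebra.smul_def, ← h, Ring.lie_def]
    abel
  have hexp : exp (a + algebraMap 𝕂 𝔸 μ) = exp μ • exp a := by
    rw [exp_add_of_commute (Algebra.commutes μ a).symm, ← algebraMap_exp_comm,
      ← Algebra.commutes, ← Algebra.smul_def]
  calc exp a * b * exp (-a) = b * exp (a + algebraMap 𝕂 𝔸 μ) * exp (-a) := by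
        rw [hsemi.exp_right.eq]
    _ = exp μ • b := by
        rw [hexp, mul_smul_comm, smul_mul_assoc, mul_assoc,
          ← exp_add_of_commute (Commute.refl a).neg_right, add_neg_cancel, exp_zero, mul_one]

theorem lie_Hmat_nbar (n : ℕ) (X : Fin n → ℝ) : ⁅Hmat n, nbar n X⁆ = -nbar n X := by
  simp only [Ring.lie_def, Hmat, nbar, fromBlocks_multiply, sub_eq_add_neg, fromBlocks_neg,
    fromBlocks_add]
  congr 1
  · simp
  · ext i j; fin_cases i <;> simp [vecHead, vecTail]
  · ext i j; fin_cases j <;> simp [mul_apply, Fin.sum_univ_two]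
  · simp

theorem nbar_smul (n : ℕ) (r : ℝ) (X : Fin n → ℝ) : nbar n (r • X) = r • nbar n X := by
  ext (i | i) (j | j) <;> simp [nbar, mul_ite]

theorem exp_smul_Hmat_mul_nbar_mul_inv (n : ℕ) (t : ℝ) (X : Fin n → ℝ) :
    exp (t • Hmat n) * nbar n X * (exp (t • Hmat n))⁻¹ = Real.exp (-t) • nbar n X := by
  have h : ⁅t • Hmat n, nbar n X⁆ = (-t) • nbar n X := by
    rw [Ring.lie_def, smul_mul_assoc, mul_smul_comm, ← smul_sub, ← Ring.lie_def, lie_Hmat_nbar,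
      smul_neg, neg_smul]
  open scoped Norms.Operator in
  rw [← Matrix.exp_neg, Real.exp_eq_exp_ℝ]
  exact exp_mul_mul_exp_neg_of_lie_eq_smul h

/-- For `a = exp(tH)`: `a·N̄(X)·a⁻¹ = N̄(e^{-t}X)`. -/
theorem conj_Nbar_by_a (n : ℕ) (t : ℝ) (X : Fin n → ℝ) :
    exp (t • Hmat n) * Nbar n X * (exp (t • Hmat n))⁻¹ =
      Nbar n (Real.exp (-t) • X) := by
  rw [Nbar, Nbar, ← Matrix.exp_conj _ _ (Matrix.isUnit_exp _), exp_smul_Hmat_mul_nbar_mul_inv,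
    nbar_smul]

end
end

section
/- For X ∈ ℝⁿ \ {0} and w̃₀ = diag(-1, 1, 1ₙ), one has the decomposition w̃₀·N̄(X) = N̄(U)·m·a·n where U = -X/|X|², a = exp(2 log|X| · H), m = diag(-1, -1, ψₙ(X)), and n is an element of N = exp(𝔫) (the group of matrices exp of first row (0,0,Z), second row (0,0,Z), bottom (Zᵀ,-Zᵀ,0ₙ)). -/
open Matrix NormedSpace

noncomputable section

/-- The nilpotent Lie algebra element of `𝔫`: first row `(0,0,Z)`, second row
`(0,0,Z)`, bottom rows `(Zᵀ, -Zᵀ, 0ₙ)`. -/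
def nupper (n : ℕ) (Z : Fin n → ℝ) : Matrix (Fin 2 ⊕ Fin n) (Fin 2 ⊕ Fin n) ℝ :=
  Matrix.fromBlocks 0
    (Matrix.of fun (_ : Fin 2) j => Z j)
    (Matrix.of fun i (j : Fin 2) => if j = 0 then Z i else -Z i) 0

/-- `ψₙ(X) = 1ₙ - (2/|X|²)·XᵀX`. -/
def psi (n : ℕ) (X : Fin n → ℝ) : Matrix (Fin n) (Fin n) ℝ :=
  (1 : Matrix (Fin n) (Fin n) ℝ) -
    (2 / ∑ i, X i ^ 2) • Matrix.of (fun i j => X i * X j)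

/-!
Both nilpotent generators have the shape `fromBlocks 0 (u ⊗ X) (X ⊗ v) 0` with `v ⬝ᵥ u = 0`, so
they cube to zero and their exponentials are quadratic; `H` satisfies `H³ = H`, so
`exp (t • H) = 1 + sinh t • H + (cosh t - 1) • H²`, and for `t = log |X|²` its entries are rational
in `s = |X|²`. With the witness `Z = X / s` both sides become explicit block matrices, and the
only input beyond arithmetic in `s` is that `ψₙ(X)` is the reflection sending `X` to `-X`.
-/

theorem exp_eq_sum_range_of_pow_eq_zero (𝕂 : Type*) {𝔸 : Type*} [Field 𝕂] [CharZero 𝕂] [Ring 𝔸]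
    [Algebra 𝕂 𝔸] [TopologicalSpace 𝔸] [IsTopologicalRing 𝔸] {x : 𝔸} {k : ℕ} (h : x ^ k = 0) :
    exp x = ∑ i ∈ Finset.range k, (i.factorial⁻¹ : 𝕂) • x ^ i := by
  rw [exp_eq_tsum 𝕂]
  refine tsum_eq_sum fun i hi => ?_
  rw [pow_eq_zero_of_le (by simpa using hi) h, smul_zero]

theorem exp_smul_of_pow_three_eq_self {𝔸 : Type*} [NormedRing 𝔸] [NormedAlgebra ℝ 𝔸]
    [CompleteSpace 𝔸] {A : 𝔸} (h : A ^ 3 = A) (t : ℝ) :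
    exp (t • A) = 1 + Real.sinh t • A + (Real.cosh t - 1) • A ^ 2 := by
  have hodd (k : ℕ) : A ^ (2 * k + 1) = A := by
    induction k with
    | zero => simp
    | succ k ih => rw [show 2 * (k + 1) + 1 = 2 * k + 1 + 2 by ring, pow_add, ih, ← pow_succ', h]
  have heven (k : ℕ) : A ^ (2 * k) = A ^ 2 + if k = 0 then 1 - A ^ 2 else 0 := by
    rcases k with _ | k
    · simp
    · rw [if_neg k.succ_ne_zero, add_zero, show 2 * (k + 1) = 2 * k + 1 + 1 by ring, pow_succ,
        hodd, sq]
  have hsum : HasSum (fun k => (k.factorial⁻¹ : ℝ) • (t • A) ^ k)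
      ((Real.cosh t • A ^ 2 + (1 - A ^ 2)) + Real.sinh t • A) := by
    refine HasSum.even_add_odd ?_ ?_
    · convert ((Real.hasSum_cosh t).smul_const (A ^ 2)).add (hasSum_ite_eq 0 (1 - A ^ 2)) using 1
      funext k
      rw [smul_pow, smul_smul, heven]
      rcases k with _ | k <;> simp [div_eq_inv_mul]
    · convert (Real.hasSum_sinh t).smul_const A using 1
      funext k
      rw [smul_pow, smul_smul, hodd, div_eq_inv_mul]
  rw [(exp_series_hasSum_exp' (𝕂 := ℝ) (t • A)).unique hsum, sub_smul, one_smul]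
  abel

section VecMulVecBlocks

variable {𝕂 l m : Type*} [Fintype l] [Fintype m] [DecidableEq l] [DecidableEq m]

theorem fromBlocks_vecMulVec_sq [CommRing 𝕂] (u v : l → 𝕂) (x : m → 𝕂) (huv : v ⬝ᵥ u = 0) :
    fromBlocks 0 (vecMulVec u x) (vecMulVec x v) 0 ^ 2 =
      fromBlocks ((x ⬝ᵥ x) • vecMulVec u v) 0 0 0 := by
  simp [sq, fromBlocks_multiply, vecMulVec_mul_vecMulVec, huv]

theorem exp_fromBlocks_vecMulVec [Field 𝕂] [CharZero 𝕂] [TopologicalSpace 𝕂] [IsTopologicalRing 𝕂]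
    (u v : l → 𝕂) (x : m → 𝕂) (huv : v ⬝ᵥ u = 0) :
    exp (fromBlocks 0 (vecMulVec u x) (vecMulVec x v) 0) =
      fromBlocks (1 + ((x ⬝ᵥ x) / 2) • vecMulVec u v) (vecMulVec u x) (vecMulVec x v) 1 := by
  have hcube : fromBlocks 0 (vecMulVec u x) (vecMulVec x v) 0 ^ 3 = 0 := by
    have hzero : vecMulVec u (0 : m → 𝕂) = 0 := by ext; simp [vecMulVec_apply]
    rw [pow_succ, fromBlocks_vecMulVec_sq u v x huv]
    simp [fromBlocks_multiply, vecMulVec_mul_vecMulVec, huv, hzero]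
  rw [exp_eq_sum_range_of_pow_eq_zero 𝕂 hcube]
  simp [Finset.sum_range_succ, fromBlocks_vecMulVec_sq u v x huv, ← fromBlocks_one,
    fromBlocks_smul, fromBlocks_add, smul_smul, div_eq_inv_mul]

end VecMulVecBlocks

theorem nbar_eq_fromBlocks (n : ℕ) (X : Fin n → ℝ) :
    nbar n X = fromBlocks 0 (vecMulVec ![1, -1] X) (vecMulVec X ![1, 1]) 0 := by
  unfold nbar
  congr 1
  · ext i j; fin_cases i <;> simp [vecMulVec_apply]
  · ext i j; fin_cases j <;> simp [vecMulVec_apply]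

theorem nupper_eq_fromBlocks (n : ℕ) (Z : Fin n → ℝ) :
    nupper n Z = fromBlocks 0 (vecMulVec ![1, 1] Z) (vecMulVec Z ![1, -1]) 0 := by
  unfold nupper
  congr 1
  · ext i j; fin_cases i <;> simp [vecMulVec_apply]
  · ext i j; fin_cases j <;> simp [vecMulVec_apply]

theorem Nbar_eq_fromBlocks (n : ℕ) (X : Fin n → ℝ) :
    Nbar n X = fromBlocks (1 + ((X ⬝ᵥ X) / 2) • vecMulVec ![1, -1] ![1, 1])
      (vecMulVec ![1, -1] X) (vecMulVec X ![1, 1]) 1 := by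
  rw [Nbar, nbar_eq_fromBlocks, exp_fromBlocks_vecMulVec]
  simp [dotProduct]

theorem exp_nupper_eq_fromBlocks (n : ℕ) (Z : Fin n → ℝ) :
    exp (nupper n Z) = fromBlocks (1 + ((Z ⬝ᵥ Z) / 2) • vecMulVec ![1, 1] ![1, -1])
      (vecMulVec ![1, 1] Z) (vecMulVec Z ![1, -1]) 1 := by
  rw [nupper_eq_fromBlocks, exp_fromBlocks_vecMulVec]
  simp [dotProduct]

theorem Hmat_pow_three (n : ℕ) : Hmat n ^ 3 = Hmat n := by
  simp [Hmat, pow_succ, fromBlocks_multiply]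

theorem exp_smul_Hmat (n : ℕ) (t : ℝ) :
    exp (t • Hmat n) =
      fromBlocks !![Real.cosh t, Real.sinh t; Real.sinh t, Real.cosh t] 0 0 1 := by
  -- `exp` does not depend on the norm, so any Banach algebra norm on matrices may be used here.
  refine (open scoped Norms.Operator in
    exp_smul_of_pow_three_eq_self (Hmat_pow_three n) t).trans ?_
  rw [← fromBlocks_one, Hmat, sq, fromBlocks_multiply]
  simp only [fromBlocks_smul, fromBlocks_add]
  congr 1
  · ext i j; fin_cases i <;> fin_cases j <;> simp
  all_goals simp

theorem exp_two_mul_log_sqrt_smul_Hmat (n : ℕ) {s : ℝ} (hs : 0 < s) :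
    exp ((2 * Real.log √s) • Hmat n) =
      fromBlocks !![(s + s⁻¹) / 2, (s - s⁻¹) / 2; (s - s⁻¹) / 2, (s + s⁻¹) / 2] 0 0 1 := by
  rw [Real.log_sqrt hs.le, mul_div_cancel₀ _ two_ne_zero, exp_smul_Hmat, Real.cosh_log hs,
    Real.sinh_log hs]

theorem psi_eq_sub_vecMulVec (n : ℕ) (X : Fin n → ℝ) :
    psi n X = 1 - (2 / (X ⬝ᵥ X)) • vecMulVec X X := by
  simp [psi, vecMulVec, dotProduct, sq]

theorem psi_mulVec_self {n : ℕ} {X : Fin n → ℝ} (hX : X ≠ 0) : psi n X *ᵥ X = -X := by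
  have hXX : X ⬝ᵥ X ≠ 0 := dotProduct_self_eq_zero.not.mpr hX
  rw [psi_eq_sub_vecMulVec, sub_mulVec, one_mulVec, smul_mulVec, vecMulVec_mulVec, op_smul_eq_smul,
    smul_smul, div_mul_cancel₀ _ hXX, two_smul, sub_add_cancel_left]

theorem vecMul_psi_self {n : ℕ} {X : Fin n → ℝ} (hX : X ≠ 0) : X ᵥ* psi n X = -X := by
  have hXX : X ⬝ᵥ X ≠ 0 := dotProduct_self_eq_zero.not.mpr hX
  rw [psi_eq_sub_vecMulVec, vecMul_sub, vecMul_one, vecMul_smul, vecMul_vecMulVec, smul_smul,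
    div_mul_cancel₀ _ hXX, two_smul, sub_add_cancel_left]

/-- For `X ≠ 0` and `w̃₀ = diag(-1,1,1ₙ)` one has the Bruhat decomposition
`w̃₀·N̄(X) = N̄(U)·m·a·n` with `U = -X/|X|²`, `m = diag(-1,-1,ψₙ(X))`,
`a = exp(2 log|X|·H)` and some `n ∈ N = exp(𝔫)`. -/
theorem bruhat_decomposition (n : ℕ) (X : Fin n → ℝ) (hX : X ≠ 0) :
    let w0 : Matrix (Fin 2 ⊕ Fin n) (Fin 2 ⊕ Fin n) ℝ :=
      Matrix.fromBlocks (Matrix.diagonal ![-1, 1]) 0 0 1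
    let U : Fin n → ℝ := -(∑ i, X i ^ 2)⁻¹ • X
    let m : Matrix (Fin 2 ⊕ Fin n) (Fin 2 ⊕ Fin n) ℝ :=
      Matrix.fromBlocks (-(1 : Matrix (Fin 2) (Fin 2) ℝ)) 0 0 (psi n X)
    let a : Matrix (Fin 2 ⊕ Fin n) (Fin 2 ⊕ Fin n) ℝ :=
      exp ((2 * Real.log (Real.sqrt (∑ i, X i ^ 2))) • Hmat n)
    ∃ Z : Fin n → ℝ, w0 * Nbar n X = Nbar n U * m * a * exp (nupper n Z) := by
  intro w0 U m a
  have hs : 0 < X ⬝ᵥ X := by simpa using dotProduct_star_self_pos_iff.mpr hX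
  have hsum : ∑ i, X i ^ 2 = X ⬝ᵥ X := by simp [dotProduct, sq]
  refine ⟨(X ⬝ᵥ X)⁻¹ • X, ?_⟩
  simp only [w0, U, m, a, hsum, exp_two_mul_log_sqrt_smul_Hmat n hs, Nbar_eq_fromBlocks,
    exp_nupper_eq_fromBlocks, fromBlocks_multiply, Matrix.mul_zero, Matrix.zero_mul,
    Matrix.mul_one, Matrix.one_mul, add_zero, zero_add, fromBlocks_inj]
  simp only [vecMulVec_mul, mul_vecMulVec, neg_smul, neg_vecMul, smul_vecMul, mulVec_smul,
    vecMul_psi_self hX, psi_mulVec_self hX, vecMulVec_mulVec, op_smul_eq_smul, smul_dotProduct,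
    dotProduct_smul, neg_dotProduct, dotProduct_neg]
  rw [psi_eq_sub_vecMulVec]
  -- Hiding `|X|²` keeps `simp` from unfolding it back into a sum over `Fin n`.
  generalize X ⬝ᵥ X = s at hs ⊢
  refine ⟨?_, ?_, ?_, ?_⟩
  · ext i j
    fin_cases i <;> fin_cases j <;> simp [mul_apply, Fin.sum_univ_two] <;> field_simp <;> ring
  · ext i j
    fin_cases i <;> simp [mul_apply, vecMulVec_apply, Fin.sum_univ_two, -cons_vecMulVec] <;>
      field_simp <;> ring
  · ext i j
    fin_cases j <;> simp [vecMulVec_apply, vecMul, dotProduct, Fin.sum_univ_two] <;>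
      field_simp <;> ring
  · ext i j
    simp [vecMulVec_apply, one_apply]
    field_simp
    ring

end
end
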